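/- arXiv:0810.3331 — 2 statements merged into one kernel-verified Lean document; each statement's English description precedes it below -/
import Mathlib

section
/- Let a, b, c be integers with gcd(a,b,c) = 1, d := b² − 4ac > 0, and let t, u be positive integers with t² − d·u² = 4. Let M = [[(t − bu)/2, a·u], [−c·u, (t + bu)/2]] (whose entries are integers). Then, writing M = [[a',b'],[c',d']], one has sign(a' + d') = 1, gcd(b', d' − a', −c') = u, and (1/u)·[b', d' − a', −c'] = [a, b, c]; that is, B(M) = [a,b,c]. -/
/-!
Reducing the Pell equation mod 2 shows `t ≡ b u (mod 2)`, so the diagonal entries of `M` are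
integers with sum `t > 0` and difference `b u`. The vector `[b', d' - a', -c']` is then
`u · [a, b, c]`, and primitivity of `[a, b, c]` makes its content exactly `u`.
-/

theorem Int.even_sq_sub_sq_iff (x y : ℤ) : Even (x ^ 2 - y ^ 2) ↔ Even (x - y) := by
  simp [Int.even_sub, Int.even_pow]

theorem Int.ediv_two_sub_add_ediv_two_add {t s : ℤ} (h : Even (t - s)) :
    (t - s) / 2 + (t + s) / 2 = t := by
  obtain ⟨k, hk⟩ := h
  omega

theorem Int.ediv_two_add_sub_ediv_two_sub {t s : ℤ} (h : Even (t - s)) :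
    (t + s) / 2 - (t - s) / 2 = s := by
  obtain ⟨k, hk⟩ := h
  omega

theorem Int.gcd_mul_right_gcd_mul_right (a b c u : ℤ) :
    Int.gcd (a * u) (Int.gcd (b * u) (c * u)) = Int.gcd a (Int.gcd b c) * u.natAbs := by
  simp only [Int.gcd, Int.natAbs_mul, Int.natAbs_natCast, Nat.gcd_mul_right]

theorem even_sub_mul_of_pell {a b c t u : ℤ} (hPell : t ^ 2 - (b ^ 2 - 4 * a * c) * u ^ 2 = 4) :
    Even (t - b * u) := by
  rw [← Int.even_sq_sub_sq_iff]
  exact ⟨2 * (1 - a * c * u ^ 2), by linear_combination hPell⟩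

theorem stmt4_general (a b c : ℤ) (hprim : Int.gcd a (Int.gcd b c) = 1)
    (t u : ℤ) (ht : 0 < t) (hu : 0 < u)
    (hPell : t ^ 2 - (b ^ 2 - 4 * a * c) * u ^ 2 = 4) :
    Int.sign ((t - b * u) / 2 + (t + b * u) / 2) = 1 ∧
    (Int.gcd (a * u) (Int.gcd ((t + b * u) / 2 - (t - b * u) / 2) (-(-(c * u)))) : ℤ) = u ∧
    (((a * u : ℤ) : ℚ) / (u : ℚ),
     (((t + b * u) / 2 - (t - b * u) / 2 : ℤ) : ℚ) / (u : ℚ),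
     ((-(-(c * u)) : ℤ) : ℚ) / (u : ℚ)) = ((a : ℚ), (b : ℚ), (c : ℚ)) := by
  have hpar := even_sub_mul_of_pell hPell
  have hu0 : (u : ℚ) ≠ 0 := by exact_mod_cast hu.ne'
  rw [Int.ediv_two_sub_add_ediv_two_add hpar, Int.ediv_two_add_sub_ediv_two_sub hpar, neg_neg]
  refine ⟨Int.sign_eq_one_of_pos ht, ?_, ?_⟩
  · rw [Int.gcd_mul_right_gcd_mul_right, hprim, one_mul, Int.natCast_natAbs, abs_of_pos hu]
  · push_cast
    simp only [mul_div_cancel_right₀ _ hu0]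

/-- Let `[a,b,c]` be a primitive integral binary quadratic form of
positive discriminant `d = b² - 4ac`, and let `(t,u)`, `t,u > 0`, solve the
Pellian equation `t² - d·u² = 4`.  Write
`M = [[a',b'],[c',d']] = [[(t - bu)/2, au], [-cu, (t + bu)/2]]`.
Then `sign(a' + d') = 1`, `gcd(b', d' - a', -c') = u`, and
`(1/u)·[b', d' - a', -c'] = [a, b, c]`; that is, `B(M) = [a,b,c]`. -/
theorem stmt4 (a b c : ℤ) (hprim : Int.gcd a (Int.gcd b c) = 1)
    (hd : 0 < b ^ 2 - 4 * a * c)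
    (t u : ℤ) (ht : 0 < t) (hu : 0 < u)
    (hPell : t ^ 2 - (b ^ 2 - 4 * a * c) * u ^ 2 = 4) :
    Int.sign ((t - b * u) / 2 + (t + b * u) / 2) = 1 ∧
    (Int.gcd (a * u) (Int.gcd ((t + b * u) / 2 - (t - b * u) / 2) (-(-(c * u)))) : ℤ) = u ∧
    (((a * u : ℤ) : ℚ) / (u : ℚ),
     (((t + b * u) / 2 - (t - b * u) / 2 : ℤ) : ℚ) / (u : ℚ),
     ((-(-(c * u)) : ℤ) : ℚ) / (u : ℚ)) = ((a : ℚ), (b : ℚ), (c : ℚ)) :=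
  stmt4_general a b c hprim t u ht hu hPell
end

section
/- For every nonzero real number r, ψ(1/4 + ir) − ψ(1/4 − ir) + ψ(3/4 + ir) − ψ(3/4 − ir) = 2i·sinh(2πr)·|Γ(1/2 + 2ir)|², where ψ(z) = Γ′(z)/Γ(z) is the digamma function (the logarithmic derivative of the complex Gamma function). -/
/-- The digamma function `ψ = Γ′/Γ`. -/
noncomputable def digamma (z : ℂ) : ℂ := deriv Complex.Gamma z / Complex.Gamma z

/-!
Taking logarithmic derivatives in Euler's reflection formula `Γ(z) Γ(1 - z) = π / sin (π z)`
gives `ψ(z) - ψ(1 - z) = -π cot (π z)` off the integers. Applying this at `z = 1/4 + ir` and at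
`z + 1/2`, the two cotangents combine through `cot w - tan w = 2 cot 2w` into
`-2π cot (π/2 + 2πir) = 2πi tanh (2πr)`. On the other side, `Γ(z̄) = conj Γ(z)` and the reflection
formula at `1/2 + 2ir` give `|Γ(1/2 + 2ir)|² = π / cosh (2πr)`.
-/

namespace Complex

open Real ComplexConjugate

local notation "ℂ_ℤ" => integerComplement

theorem integerComplement.ne_neg_natCast {z : ℂ} (hz : z ∈ ℂ_ℤ) (m : ℕ) : z ≠ -m := by
  rintro rfl
  exact hz ⟨-m, by push_cast; rfl⟩

theorem one_sub_mem_integerComplement {z : ℂ} (hz : z ∈ ℂ_ℤ) : 1 - z ∈ ℂ_ℤ := by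
  rintro ⟨n, hn⟩
  exact hz ⟨1 - n, by push_cast; rw [hn]; ring⟩

theorem mem_integerComplement_of_fract_re_ne_zero {z : ℂ} (h : Int.fract z.re ≠ 0) :
    z ∈ ℂ_ℤ := by
  rintro ⟨n, rfl⟩
  simp at h

theorem cot_add_pi_div_two (z : ℂ) : cot (z + π / 2) = -tan z := by
  rw [cot_eq_cos_div_sin, tan_eq_sin_div_cos, cos_add_pi_div_two, sin_add_pi_div_two, neg_div]

-- Unconditional: where `sin z` or `cos z` vanishes, both sides are `0` since `x / 0 = 0`.
theorem cot_sub_tan (z : ℂ) : cot z - tan z = 2 * cot (2 * z) := by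
  rw [cot_eq_cos_div_sin, tan_eq_sin_div_cos, cot_eq_cos_div_sin, sin_two_mul, cos_two_mul]
  rcases eq_or_ne (sin z) 0 with hs | hs
  · simp [hs]
  rcases eq_or_ne (cos z) 0 with hc | hc
  · simp [hc]
  field_simp
  linear_combination -sin_sq_add_cos_sq z

theorem digamma_sub_digamma_one_sub {z : ℂ} (hz : z ∈ ℂ_ℤ) :
    digamma z - digamma (1 - z) = -π * cot (π * z) := by
  have hΓ := integerComplement.ne_neg_natCast hz
  have hΓ' := integerComplement.ne_neg_natCast (one_sub_mem_integerComplement hz)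
  have hπ : (π : ℂ) ≠ 0 := ofReal_ne_zero.mpr pi_ne_zero
  have hleft : logDeriv (fun w ↦ Gamma w * Gamma (1 - w)) z = digamma z - digamma (1 - z) := by
    rw [logDeriv_mul (f := Gamma) (g := fun w ↦ Gamma (1 - w)) _ (Gamma_ne_zero hΓ)
        (Gamma_ne_zero hΓ') (differentiableAt_Gamma _ hΓ)
        ((differentiableAt_Gamma _ hΓ').comp z (by fun_prop)),
      ← Function.comp_def Gamma, logDeriv_comp (differentiableAt_Gamma _ hΓ') (by fun_prop),
      show deriv (fun w : ℂ ↦ 1 - w) z = -1 by simp, digamma_def]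
    ring
  have hright : logDeriv (fun w ↦ (π : ℂ) / sin (π * w)) z = -π * cot (π * z) := by
    rw [logDeriv_div (f := fun _ ↦ (π : ℂ)) (g := fun w ↦ sin (π * w)) _ hπ
        (sin_pi_mul_ne_zero hz) (by fun_prop) (by fun_prop),
      logDeriv_const, ← Function.comp_def sin, logDeriv_comp differentiableAt_sin (by fun_prop),
      logDeriv_sin, deriv_const_mul_id, Pi.zero_apply]
    ring
  rw [← hleft, ← hright]
  simp_rw [Gamma_mul_Gamma_one_sub]

theorem digamma_sub_add_sub_eq_neg_two_pi_mul_cot {z : ℂ} (hz : 2 * z ∈ ℂ_ℤ) :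
    digamma z - digamma (1 / 2 - z) + digamma (z + 1 / 2) - digamma (1 - z)
      = -2 * π * cot (2 * π * z) := by
  have hz₁ : z ∈ ℂ_ℤ := by
    rintro ⟨n, rfl⟩
    exact hz ⟨2 * n, by push_cast; ring⟩
  have hz₂ : z + 1 / 2 ∈ ℂ_ℤ := by
    rintro ⟨n, hn⟩
    exact hz ⟨2 * n - 1, by push_cast; rw [hn]; ring⟩
  have h₁ := digamma_sub_digamma_one_sub hz₁
  have h₂ := digamma_sub_digamma_one_sub hz₂
  rw [show 1 - (z + 1 / 2) = 1 / 2 - z by ring,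
    show (π : ℂ) * (z + 1 / 2) = π * z + π / 2 by ring, cot_add_pi_div_two] at h₂
  rw [show 2 * (π : ℂ) * z = 2 * (π * z) by ring]
  linear_combination h₁ + h₂ - π * cot_sub_tan (π * z)

theorem norm_Gamma_one_half_add_mul_I_sq (y : ℝ) :
    ‖Gamma (1 / 2 + y * I)‖ ^ 2 = π / Real.cosh (π * y) := by
  apply ofReal_injective
  have hconj : conj (1 / 2 + y * I) = 1 - (1 / 2 + y * I) := by
    rw [map_add, map_mul, conj_ofReal, conj_I, map_div₀, map_one, map_ofNat]
    ring
  push_cast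
  rw [← mul_conj', ← Gamma_conj, hconj, Gamma_mul_Gamma_one_sub,
    show (π : ℂ) * (1 / 2 + y * I) = (π * y : ℝ) * I + π / 2 by push_cast; ring,
    sin_add_pi_div_two, cos_mul_I, ofReal_mul]

theorem digamma_quarter_sum_eq_sinh_mul_norm_Gamma_sq (r : ℝ) :
    digamma (1 / 4 + r * I) - digamma (1 / 4 - r * I)
        + digamma (3 / 4 + r * I) - digamma (3 / 4 - r * I)
      = 2 * I * Real.sinh (2 * π * r) * (‖Gamma (1 / 2 + 2 * r * I)‖ : ℂ) ^ 2 := by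
  have hz : 2 * (1 / 4 + r * I) ∈ ℂ_ℤ := by
    refine mem_integerComplement_of_fract_re_ne_zero ?_
    norm_num [Int.fract_eq_self.mpr]
  have hcot : cot (2 * π * (1 / 4 + r * I)) = -(tanh (2 * π * r) * I) := by
    rw [show 2 * (π : ℂ) * (1 / 4 + r * I) = (2 * π * r : ℝ) * I + π / 2 by push_cast; ring,
      cot_add_pi_div_two, tan_mul_I, ofReal_mul, ofReal_mul, ofReal_ofNat]
  have hnorm := norm_Gamma_one_half_add_mul_I_sq (2 * r)
  rw [show π * (2 * r) = 2 * π * r by ring] at hnorm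
  calc _ = -2 * π * cot (2 * π * (1 / 4 + r * I)) := by
        rw [← digamma_sub_add_sub_eq_neg_two_pi_mul_cot hz]
        ring_nf
    _ = _ := by
        rw [hcot, tanh_eq_sinh_div_cosh,
          show (2 : ℂ) * r * I = (2 * r : ℝ) * I by push_cast; ring, ← ofReal_pow, hnorm]
        push_cast
        ring

end Complex

-- The frozen `digamma` is `Complex.digamma = logDeriv Gamma` unfolded.
theorem stmt16_general (r : ℝ) :
    digamma (1 / 4 + (r : ℂ) * Complex.I) - digamma (1 / 4 - (r : ℂ) * Complex.I)
        + digamma (3 / 4 + (r : ℂ) * Complex.I) - digamma (3 / 4 - (r : ℂ) * Complex.I)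
      = 2 * Complex.I * (Real.sinh (2 * Real.pi * r) : ℂ) *
          ((‖Complex.Gamma (1 / 2 + 2 * (r : ℂ) * Complex.I)‖ : ℝ) : ℂ) ^ 2 :=
  Complex.digamma_quarter_sum_eq_sinh_mul_norm_Gamma_sq r

/-- For every nonzero real `r`,
`ψ(1/4 + ir) - ψ(1/4 - ir) + ψ(3/4 + ir) - ψ(3/4 - ir)
  = 2i·sinh(2πr)·|Γ(1/2 + 2ir)|²`. -/
theorem stmt16 (r : ℝ) (hr : r ≠ 0) :
    digamma (1 / 4 + (r : ℂ) * Complex.I) - digamma (1 / 4 - (r : ℂ) * Complex.I)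
        + digamma (3 / 4 + (r : ℂ) * Complex.I) - digamma (3 / 4 - (r : ℂ) * Complex.I)
      = 2 * Complex.I * (Real.sinh (2 * Real.pi * r) : ℂ) *
          ((‖Complex.Gamma (1 / 2 + 2 * (r : ℂ) * Complex.I)‖ : ℝ) : ℂ) ^ 2 :=
  stmt16_general r
end
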